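/- In the counter-model M, the interpretations f̂ₙ(x) = −x of the unary symbol f and Λ̂ₙ of the binder Λ are coherent families, i.e. f̂ₚ(a) □_{q,p} ⟨b₁,…,bₚ⟩ = f̂_q(a □_{q,p} ⟨b₁,…,bₚ⟩) for all a ∈ Mₚ and b₁,…,bₚ ∈ M_q, and Λ̂ₚ(a) □_{q,p} ⟨b₁,…,bₚ⟩ = Λ̂_q(a □_{q+1,p+1} ⟨1_{q+1}, b₁ □ S, …, bₚ □ S⟩) for all a ∈ M_{p+1} and b₁,…,bₚ ∈ M_q, where S = ⟨2_{q+1},…,(q+1)_{q+1}⟩. Moreover Λ̂_q(b □ S) = b for every b ∈ M_q. -/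
import Mathlib

/- ## The counter-model `M` with `Mₙ = {kₙ, lₙ, 1ₙ,…,nₙ, 1̄ₙ,…,n̄ₙ}` -/

/-- The carrier `Mₙ = {kₙ, lₙ, 1ₙ, …, nₙ, 1̄ₙ, …, n̄ₙ}` (2n+2 distinct elements):
`pr i` is the projection `(i+1)ₙ` and `bar i` is the barred element `(i+1)̄ₙ`. -/
inductive CM (n : ℕ) : Type
  | k : CM n
  | l : CM n
  | pr : Fin n → CM n
  | bar : Fin n → CM n
deriving DecidableEq

/-- The involution `−`: fixes `kₙ` and `lₙ`, swaps `iₙ` and `īₙ`. -/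
def CM.neg {n : ℕ} : CM n → CM n
  | .k => .k
  | .l => .l
  | .pr i => .bar i
  | .bar i => .pr i

/-- Composition `a □_{p,n} ⟨b₁,…,bₙ⟩`:
`kₙ □ b = kₚ`, `lₙ □ b = lₚ`, `iₙ □ b = bᵢ`, `īₙ □ b = −bᵢ`. -/
def CM.comp {n p : ℕ} : CM n → (Fin n → CM p) → CM p
  | .k, _ => .k
  | .l, _ => .l
  | .pr i, b => b i
  | .bar i, b => (b i).neg
/-- The interpretation `Λ̂ₙ : M_{n+1} → Mₙ` of the binder `Λ`:
`Λ̂ₙ(k) = k`, `Λ̂ₙ(l) = l`, `Λ̂ₙ(1) = k`, `Λ̂ₙ(1̄) = l`,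
`Λ̂ₙ(i) = i−1` and `Λ̂ₙ(ī) = (i−1)̄` for `i ≥ 2`. -/
def CMLam (n : ℕ) : CM (n + 1) → CM n
  | .k => .k
  | .l => .l
  | .pr i => Fin.cases CM.k (fun j => CM.pr j) i
  | .bar i => Fin.cases CM.l (fun j => CM.bar j) i

/-- In the counter-model `M`, the families `f̂ₙ = −` and `Λ̂ₙ` are coherent:
`f̂ₚ(a) □ b = f̂_q(a □ b)`, and
`Λ̂ₚ(a) □_{q,p} ⟨b₁,…,bₚ⟩ = Λ̂_q(a □_{q+1,p+1} ⟨1_{q+1}, b₁ □ S, …, bₚ □ S⟩)` with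
`S = ⟨2_{q+1},…,(q+1)_{q+1}⟩`; moreover `Λ̂_q(b □ S) = b` for every `b ∈ M_q`. -/
theorem CM_interpretations_coherent :
    (∀ (p q : ℕ) (a : CM p) (b : Fin p → CM q),
        CM.comp (CM.neg a) b = CM.neg (CM.comp a b)) ∧
    (∀ (p q : ℕ) (a : CM (p + 1)) (b : Fin p → CM q),
        CM.comp (CMLam p a) b =
          CMLam q (CM.comp a
            (Fin.cases (CM.pr 0)
              (fun j => CM.comp (b j) (fun m : Fin q => CM.pr m.succ))))) ∧
    (∀ (q : ℕ) (b : CM q),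
        CMLam q (CM.comp b (fun m : Fin q => CM.pr m.succ)) = b) := by
  refine ⟨fun p q a b => ?_, fun p q a b => ?_, fun q b => ?_⟩
  · cases a <;> simp [CM.neg, CM.comp, CM.neg.eq_def]
    · cases b ‹_› <;> rfl
  · cases a with
    | k => rfl
    | l => rfl
    | pr i =>
      refine Fin.cases rfl (fun j => ?_) i
      simp [CMLam, CM.comp]
      cases b j <;> rfl
    | bar i =>
      refine Fin.cases rfl (fun j => ?_) i
      simp [CMLam, CM.comp, CM.neg]
      cases b j <;> rfl
  · cases b <;> rfl
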